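/- arXiv:2502.03479 — 2 statements merged into one kernel-verified Lean document; each statement's English description precedes it below -/
import Mathlib

section
/- Matrix convolution of sub-distribution-valued matrices is associative: for matrix measures Q₁, Q₂ (given by matrices of finite measures on [0,∞)) and a bounded measurable matrix function F, (Q₁ * (Q₂ * F))(t) = ((Q₁ * Q₂) * F)(t) for all t ≥ 0, where (Q₁*Q₂) denotes the matrix of convolution measures. -/
open MeasureTheory Finset

/-- Matrix convolution `(Q*F)(t)ᵢⱼ = Σₖ ∫₀ᵗ Fₖⱼ(t−u) dQᵢₖ(u)`. -/
noncomputable def mconv {r : ℕ} (Q : Fin r → Fin r → Measure ℝ)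
    (F : ℝ → Matrix (Fin r) (Fin r) ℝ) : ℝ → Matrix (Fin r) (Fin r) ℝ :=
  fun t => Matrix.of fun i j => ∑ k, ∫ u in Set.Icc (0:ℝ) t, F (t - u) k j ∂(Q i k)

/-- Convolution of two matrices of measures:
`(Q₁*Q₂)ᵢⱼ = Σₖ (Q₁ᵢₖ) ∗ (Q₂ₖⱼ)`. -/
noncomputable def mmconv {r : ℕ} (Q₁ Q₂ : Fin r → Fin r → Measure ℝ) :
    Fin r → Fin r → Measure ℝ :=
  fun i j => ∑ k, Measure.map (fun p : ℝ × ℝ => p.1 + p.2) ((Q₁ i k).prod (Q₂ k j))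
/-!
For measures supported on `[0, ∞)` the window `Icc 0 s` may be replaced by `Iic s`, and then
`∫ v in [0, t - u], g (u + v) ∂ν = ∫ v, 1{u + v ≤ t} g (u + v) ∂ν`. Since `μ ∗ ν` is the image of
`μ ⊗ ν` under addition, Fubini turns `∫ u in [0, t], ∫ v in [0, t - u], g (u + v) ∂ν ∂μ` into
`∫ w in [0, t], g w ∂(μ ∗ ν)`. With `g w = F (t - w)` this is associativity entry by entry; the
matrix identity follows by exchanging the two finite sums over the middle indices.
-/

namespace MeasureTheory.Measure

variable {E : Type*} [NormedAddCommGroup E] {μ ν : Measure ℝ} {g : ℝ → E} {t : ℝ}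

theorem restrict_finsetSum {ι α : Type*} [MeasurableSpace α] (s : Finset ι)
    (μ : ι → Measure α) (A : Set α) :
    (∑ k ∈ s, μ k).restrict A = ∑ k ∈ s, (μ k).restrict A := by
  ext B hB
  simp only [restrict_apply hB, finsetSum_apply]

theorem Icc_zero_ae_eq_Iic (hν : ν (Set.Iio 0) = 0) (s : ℝ) :
    Set.Icc 0 s =ᵐ[ν] Set.Iic s := by
  have h : Set.Ici (0 : ℝ) =ᵐ[ν] Set.univ := ae_eq_univ.mpr (by rwa [Set.compl_Ici])
  simpa only [Set.Ici_inter_Iic, Set.univ_inter] using h.inter (ae_eq_refl (Set.Iic s))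

theorem setIntegral_Icc_zero_sub_eq_integral_indicator [NormedSpace ℝ E]
    (hν : ν (Set.Iio 0) = 0) (u : ℝ) :
    ∫ v in Set.Icc 0 (t - u), g (u + v) ∂ν = ∫ v, (Set.Iic t).indicator g (u + v) ∂ν := by
  rw [setIntegral_congr_set (Icc_zero_ae_eq_Iic hν _), ← integral_indicator measurableSet_Iic]
  congr 1 with v
  simp only [Set.indicator_apply, Set.mem_Iic, le_sub_iff_add_le']

theorem conv_Iio_zero [SFinite ν] (hμ : μ (Set.Iio 0) = 0) (hν : ν (Set.Iio 0) = 0) :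
    (μ ∗ ν) (Set.Iio 0) = 0 := by
  rw [Measure.conv, map_apply (by fun_prop) measurableSet_Iio]
  refine measure_mono_null (t := Set.Iio 0 ×ˢ Set.univ ∪ Set.univ ×ˢ Set.Iio 0) ?_ ?_
  · rintro ⟨u, v⟩ (huv : u + v < 0)
    by_contra! h
    simp only [Set.mem_union, Set.mem_prod, Set.mem_Iio, Set.mem_univ, and_true, true_and,
      not_or, not_lt] at h
    linarith
  · exact measure_union_null (by rw [prod_prod, hμ, zero_mul]) (by rw [prod_prod, hν, mul_zero])

theorem integrable_indicator_Iic_of_integrableOn_Icc [SFinite ν] (hμ : μ (Set.Iio 0) = 0)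
    (hν : ν (Set.Iio 0) = 0) (hg : IntegrableOn g (Set.Icc 0 t) (μ ∗ ν)) :
    Integrable ((Set.Iic t).indicator g) (μ ∗ ν) :=
  (integrable_indicator_iff measurableSet_Iic).mpr
    (hg.congr_set_ae (Icc_zero_ae_eq_Iic (conv_Iio_zero hμ hν) t).symm)

variable [NormedSpace ℝ E] [SFinite ν]

theorem integrable_setIntegral_Icc_zero_sub (hμ : μ (Set.Iio 0) = 0) (hν : ν (Set.Iio 0) = 0)
    (hg : IntegrableOn g (Set.Icc 0 t) (μ ∗ ν)) :
    Integrable (fun u => ∫ v in Set.Icc 0 (t - u), g (u + v) ∂ν) μ := by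
  have h := integrable_indicator_Iic_of_integrableOn_Icc hμ hν hg
  simp_rw [setIntegral_Icc_zero_sub_eq_integral_indicator hν]
  exact ((integrable_map_measure h.1 (by fun_prop)).mp h).integral_prod_left

variable [SFinite μ]

theorem setIntegral_Icc_zero_conv (hμ : μ (Set.Iio 0) = 0) (hν : ν (Set.Iio 0) = 0)
    (hg : IntegrableOn g (Set.Icc 0 t) (μ ∗ ν)) :
    ∫ u in Set.Icc 0 t, ∫ v in Set.Icc 0 (t - u), g (u + v) ∂ν ∂μ
      = ∫ w in Set.Icc 0 t, g w ∂(μ ∗ ν) := by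
  have hvanish : ∀ u ∉ Set.Iic t, ∫ v in Set.Icc 0 (t - u), g (u + v) ∂ν = 0 := fun u hu => by
    rw [Set.Icc_eq_empty (by rw [Set.mem_Iic] at hu; linarith), restrict_empty,
      integral_zero_measure]
  rw [setIntegral_congr_set (Icc_zero_ae_eq_Iic hμ t),
    setIntegral_eq_integral_of_forall_compl_eq_zero hvanish,
    setIntegral_congr_set (Icc_zero_ae_eq_Iic (conv_Iio_zero hμ hν) t),
    ← integral_indicator measurableSet_Iic,
    integral_conv (integrable_indicator_Iic_of_integrableOn_Icc hμ hν hg)]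
  simp_rw [setIntegral_Icc_zero_sub_eq_integral_indicator hν]

end MeasureTheory.Measure

theorem mmconv_apply {r : ℕ} (Q₁ Q₂ : Fin r → Fin r → Measure ℝ) (i j : Fin r) :
    mmconv Q₁ Q₂ i j = ∑ k, Q₁ i k ∗ Q₂ k j := rfl

/-- Associativity of matrix convolution: `Q₁ * (Q₂ * F) = (Q₁ * Q₂) * F` for matrices
of finite measures supported on `[0,∞)` and bounded measurable `F`. -/
theorem stmt_9 (r : ℕ) (Q₁ Q₂ : Fin r → Fin r → Measure ℝ)
    [∀ i j, IsFiniteMeasure (Q₁ i j)] [∀ i j, IsFiniteMeasure (Q₂ i j)]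
    (hsupp₁ : ∀ i j, (Q₁ i j) (Set.Iio (0:ℝ)) = 0)
    (hsupp₂ : ∀ i j, (Q₂ i j) (Set.Iio (0:ℝ)) = 0)
    (F : ℝ → Matrix (Fin r) (Fin r) ℝ)
    (hFmeas : ∀ i j, Measurable fun t => F t i j)
    (hFbdd : ∃ C, ∀ t i j, |F t i j| ≤ C) :
    ∀ t, 0 ≤ t → mconv Q₁ (mconv Q₂ F) t = mconv (mmconv Q₁ Q₂) F t := by
  obtain ⟨C, hC⟩ := hFbdd
  intro t _
  ext i j
  have hF_int : ∀ (μ : Measure ℝ) [IsFiniteMeasure μ] (l : Fin r),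
      Integrable (fun w => F (t - w) l j) μ := fun μ _ l =>
    .of_bound ((hFmeas l j).comp (by fun_prop)).aestronglyMeasurable C
      (.of_forall fun w => hC (t - w) l j)
  simp only [mconv, mmconv_apply, Matrix.of_apply, sub_sub]
  calc ∑ k, ∫ u in Set.Icc 0 t, ∑ l, ∫ v in Set.Icc 0 (t - u), F (t - (u + v)) l j ∂Q₂ k l ∂Q₁ i k
      = ∑ k, ∑ l, ∫ w in Set.Icc 0 t, F (t - w) l j ∂(Q₁ i k ∗ Q₂ k l) := by
        refine sum_congr rfl fun k _ => ?_
        rw [integral_finsetSum _ fun l _ => (Measure.integrable_setIntegral_Icc_zero_sub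
          (hsupp₁ i k) (hsupp₂ k l) (hF_int _ l).integrableOn).integrableOn]
        exact sum_congr rfl fun l _ =>
          Measure.setIntegral_Icc_zero_conv (hsupp₁ i k) (hsupp₂ k l) (hF_int _ l).integrableOn
    _ = ∑ l, ∑ k, ∫ w in Set.Icc 0 t, F (t - w) l j ∂(Q₁ i k ∗ Q₂ k l) := sum_comm
    _ = ∑ l, ∫ w in Set.Icc 0 t, F (t - w) l j ∂(∑ k, Q₁ i k ∗ Q₂ k l) := by
        refine sum_congr rfl fun l _ => ?_
        rw [Measure.restrict_finsetSum, integral_finsetSum_measure fun k _ => (hF_int _ l).restrict]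
end

section
/- Under the setup of the previous statement, if additionally E[M₁(u,x)⁴] ≤ K for all intervals and E[M₁(u,x)²] ≤ F(x) − F(u) for a nondecreasing continuous function F, then E[|S(x)−S(u)|²|S(y)−S(x)|²] ≤ K/m + (F(y)−F(u))², so that for m large the tightness criterion of Billingsley's theorem with exponent 2 holds up to the vanishing term K/m. -/
/-!
Write `Xₐ = Mₐ(x) - Mₐ(u)` and `Yₐ = Mₐ(y) - Mₐ(x)`, so that the left-hand side is
`m⁻² E[(∑ Xₐ)² (∑ Yₐ)²]`. If a centred pair `(U, V)` is independent of a centred pair `(X, Y)`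
with `E[XY] = 0`, then in the binomial expansion of `E[(U + X)² (V + Y)²]` every term except
`E[U²V²] + E[U²] E[Y²] + E[X²] E[V²] + E[X²Y²]` contains a vanishing factor `E[U]`, `E[V]`, `E[X]`,
`E[Y]` or `E[XY]`. Adding the pairs `(Xₐ, Yₐ)` one at a time, with `E[Xₐ²Yₐ²] ≤ K` by AM-GM and
the fourth-moment bound, gives `E[(∑ Xₐ)² (∑ Yₐ)²] ≤ m K + m² (F x - F u) (F y - F x)`, and
`(F x - F u) (F y - F x) ≤ (F y - F u)²` by monotonicity.
-/

open MeasureTheory ProbabilityTheory Finset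

theorem norm_pow_mul_pow_le (a b : ℝ) {i j p : ℕ} (hij : i + j ≤ p) :
    ‖a ^ i * b ^ j‖ ≤ 1 + ‖a‖ ^ p + ‖b‖ ^ p := by
  set c := max ‖a‖ ‖b‖
  have hc : 0 ≤ c := (norm_nonneg a).trans (le_max_left _ _)
  have hcp : c ^ p ≤ ‖a‖ ^ p + ‖b‖ ^ p := by
    rcases max_choice ‖a‖ ‖b‖ with h | h <;> simp only [c, h] <;>
      linarith [pow_nonneg (norm_nonneg a) p, pow_nonneg (norm_nonneg b) p]
  calc ‖a ^ i * b ^ j‖ = ‖a‖ ^ i * ‖b‖ ^ j := by rw [norm_mul, norm_pow, norm_pow]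
    _ ≤ c ^ i * c ^ j := by gcongr; exacts [le_max_left _ _, le_max_right _ _]
    _ = c ^ (i + j) := (pow_add c i j).symm
    _ ≤ 1 + c ^ p := by
      rcases le_total c 1 with h | h
      · linarith [pow_le_one₀ hc h (n := i + j), pow_nonneg hc p]
      · linarith [pow_le_pow_right₀ h hij]
    _ ≤ 1 + ‖a‖ ^ p + ‖b‖ ^ p := by linarith

theorem Monotone.sub_mul_sub_le_sq {F : ℝ → ℝ} (hF : Monotone F) {u x y : ℝ} (hux : u ≤ x)
    (hxy : x ≤ y) : (F x - F u) * (F y - F x) ≤ (F y - F u) ^ 2 := by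
  nlinarith [sub_nonneg.2 (hF hux), sub_nonneg.2 (hF hxy)]

theorem Real.rpow_neg_half_sq {r : ℝ} (hr : 0 ≤ r) : (r ^ (-(1/2 : ℝ))) ^ 2 = r⁻¹ := by
  rw [← Real.rpow_natCast, ← Real.rpow_mul hr]
  norm_num [Real.rpow_neg_one]

section Moments

variable {Ω : Type*} [MeasurableSpace Ω] {μ : Measure Ω}

theorem MeasureTheory.MemLp.integrable_fst_pow_mul_snd_pow [IsFiniteMeasure μ]
    {Z : Ω → ℝ × ℝ} {p i j : ℕ} (hZ : MemLp Z p μ) (hij : i + j ≤ p) :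
    Integrable (fun ω => (Z ω).1 ^ i * (Z ω).2 ^ j) μ := by
  refine (((integrable_const 1).add hZ.fst.integrable_norm_pow').add
    hZ.snd.integrable_norm_pow').mono' ?_ (ae_of_all _ fun ω => norm_pow_mul_pow_le _ _ hij)
  exact (hZ.fst.aestronglyMeasurable.pow i).mul (hZ.snd.aestronglyMeasurable.pow j)

theorem memLp_four_of_integrable_pow_four {f : Ω → ℝ} (hf : AEStronglyMeasurable f μ)
    (h : Integrable (fun ω => f ω ^ 4) μ) : MemLp f 4 μ := by
  rw [← integrable_norm_rpow_iff hf (by norm_num) (by norm_num)]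
  convert h using 2 with ω
  norm_num [Real.norm_eq_abs, Real.rpow_natCast, Even.pow_abs]

theorem integral_fst_sq_mul_snd_sq_le [IsFiniteMeasure μ] {Z : Ω → ℝ × ℝ} (hZ : MemLp Z 4 μ) :
    ∫ ω, (Z ω).1 ^ 2 * (Z ω).2 ^ 2 ∂μ ≤ ((∫ ω, (Z ω).1 ^ 4 ∂μ) + ∫ ω, (Z ω).2 ^ 4 ∂μ) / 2 := by
  have h₁ := hZ.integrable_fst_pow_mul_snd_pow (i := 4) (j := 0) (by norm_num)
  have h₂ := hZ.integrable_fst_pow_mul_snd_pow (i := 0) (j := 4) (by norm_num)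
  simp only [pow_zero, mul_one, one_mul] at h₁ h₂
  rw [← integral_add h₁ h₂, ← integral_div]
  refine integral_mono (hZ.integrable_fst_pow_mul_snd_pow (by norm_num)) ((h₁.add h₂).div_const 2)
    fun ω => ?_
  nlinarith [sq_nonneg ((Z ω).1 ^ 2 - (Z ω).2 ^ 2)]

theorem ProbabilityTheory.IndepFun.integral_add_pow_mul_add_pow [IsFiniteMeasure μ]
    {Z W : Ω → ℝ × ℝ} (hZW : IndepFun Z W μ) {p n k : ℕ} (hZ : MemLp Z p μ)
    (hW : MemLp W p μ) (hnk : n + k ≤ p) :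
    ∫ ω, ((Z ω).1 + (W ω).1) ^ n * ((Z ω).2 + (W ω).2) ^ k ∂μ =
      ∑ i ∈ range (n + 1), ∑ j ∈ range (k + 1), (n.choose i * k.choose j : ℝ) *
        ((∫ ω, (Z ω).1 ^ i * (Z ω).2 ^ j ∂μ) *
          ∫ ω, (W ω).1 ^ (n - i) * (W ω).2 ^ (k - j) ∂μ) := by
  have hterm : ∀ i ∈ range (n + 1), ∀ j ∈ range (k + 1),
      Integrable (fun ω => (Z ω).1 ^ i * (Z ω).2 ^ j *
        ((W ω).1 ^ (n - i) * (W ω).2 ^ (k - j))) μ ∧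
      ∫ ω, (Z ω).1 ^ i * (Z ω).2 ^ j * ((W ω).1 ^ (n - i) * (W ω).2 ^ (k - j)) ∂μ =
        (∫ ω, (Z ω).1 ^ i * (Z ω).2 ^ j ∂μ) *
          ∫ ω, (W ω).1 ^ (n - i) * (W ω).2 ^ (k - j) ∂μ := by
    intro i hi j hj
    rw [mem_range] at hi hj
    have hind := hZW.comp (φ := fun q : ℝ × ℝ => q.1 ^ i * q.2 ^ j)
      (ψ := fun q : ℝ × ℝ => q.1 ^ (n - i) * q.2 ^ (k - j)) (by fun_prop) (by fun_prop)
    have hZij := hZ.integrable_fst_pow_mul_snd_pow (i := i) (j := j) (by omega)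
    have hWij := hW.integrable_fst_pow_mul_snd_pow (i := n - i) (j := k - j) (by omega)
    exact ⟨hind.integrable_mul hZij hWij,
      hind.integral_mul_eq_mul_integral hZij.aestronglyMeasurable hWij.aestronglyMeasurable⟩
  calc ∫ ω, ((Z ω).1 + (W ω).1) ^ n * ((Z ω).2 + (W ω).2) ^ k ∂μ
      = ∫ ω, ∑ i ∈ range (n + 1), ∑ j ∈ range (k + 1), (n.choose i * k.choose j : ℝ) *
          ((Z ω).1 ^ i * (Z ω).2 ^ j * ((W ω).1 ^ (n - i) * (W ω).2 ^ (k - j))) ∂μ := by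
        refine integral_congr_ae (ae_of_all _ fun ω => ?_)
        simp only [add_pow, sum_mul_sum]
        refine sum_congr rfl fun i _ => sum_congr rfl fun j _ => by ring
    _ = _ := by
        rw [integral_finsetSum _ fun i hi => integrable_finsetSum _ fun j hj =>
          (hterm i hi j hj).1.const_mul _]
        refine sum_congr rfl fun i hi => ?_
        rw [integral_finsetSum _ fun j hj => (hterm i hi j hj).1.const_mul _]
        refine sum_congr rfl fun j hj => ?_
        rw [integral_const_mul, (hterm i hi j hj).2]

theorem ProbabilityTheory.IndepFun.integral_add_sq_mul_add_sq [IsProbabilityMeasure μ]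
    {Z W : Ω → ℝ × ℝ} (hZW : IndepFun Z W μ) (hZ : MemLp Z 4 μ) (hW : MemLp W 4 μ)
    (hZ₁ : ∫ ω, (Z ω).1 ∂μ = 0) (hZ₂ : ∫ ω, (Z ω).2 ∂μ = 0)
    (hZ₁₂ : ∫ ω, (Z ω).1 * (Z ω).2 ∂μ = 0)
    (hW₁ : ∫ ω, (W ω).1 ∂μ = 0) (hW₂ : ∫ ω, (W ω).2 ∂μ = 0) :
    ∫ ω, ((Z ω).1 + (W ω).1) ^ 2 * ((Z ω).2 + (W ω).2) ^ 2 ∂μ =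
      ∫ ω, (Z ω).1 ^ 2 * (Z ω).2 ^ 2 ∂μ + (∫ ω, (Z ω).1 ^ 2 ∂μ) * ∫ ω, (W ω).2 ^ 2 ∂μ +
        (∫ ω, (Z ω).2 ^ 2 ∂μ) * ∫ ω, (W ω).1 ^ 2 ∂μ + ∫ ω, (W ω).1 ^ 2 * (W ω).2 ^ 2 ∂μ := by
  rw [hZW.integral_add_pow_mul_add_pow hZ hW le_rfl]
  simp only [Nat.reduceAdd, sum_range_succ, range_one, sum_singleton, Nat.choose_zero_right,
    Nat.cast_one, mul_one, pow_zero, tsub_zero, Nat.choose_succ_self_right, Nat.cast_ofNat,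
    pow_one, Nat.add_one_sub_one, Nat.choose_self, tsub_self, integral_const, probReal_univ,
    smul_eq_mul, one_mul, hZ₁, hZ₂, hZ₁₂, hW₁, hW₂, zero_mul, mul_zero, add_zero]
  ring

variable {ι : Type*}

theorem ProbabilityTheory.iIndepFun.integral_sum_sq_le [IsProbabilityMeasure μ]
    {X : ι → Ω → ℝ} (hX : iIndepFun X μ) (hL2 : ∀ i, MemLp (X i) 2 μ)
    (h0 : ∀ i, ∫ ω, X i ω ∂μ = 0) {α : ℝ} (hα : ∀ i, ∫ ω, X i ω ^ 2 ∂μ ≤ α) (s : Finset ι) :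
    ∫ ω, (∑ i ∈ s, X i ω) ^ 2 ∂μ ≤ #s * α := by
  have hsum0 : ∫ ω, (∑ i ∈ s, X i) ω ∂μ = 0 := by
    simp only [Finset.sum_apply]
    rw [integral_finsetSum _ fun i _ => (hL2 i).integrable one_le_two]
    exact sum_eq_zero fun i _ => h0 i
  have hvar := IndepFun.variance_sum (s := s) (fun i _ => hL2 i)
    fun i _ j _ hij => hX.indepFun hij
  rw [variance_of_integral_eq_zero
    (memLp_finsetSum' s fun i _ => hL2 i).aestronglyMeasurable.aemeasurable hsum0] at hvar
  simp only [Finset.sum_apply] at hvar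
  calc ∫ ω, (∑ i ∈ s, X i ω) ^ 2 ∂μ = ∑ i ∈ s, ∫ ω, X i ω ^ 2 ∂μ := by
        rw [hvar]
        exact sum_congr rfl fun i _ =>
          variance_of_integral_eq_zero (hL2 i).aestronglyMeasurable.aemeasurable (h0 i)
    _ ≤ #s * α := by simpa using sum_le_card_nsmul s _ α fun i _ => hα i

theorem ProbabilityTheory.iIndepFun.integral_sum_sq_mul_sq_le [IsProbabilityMeasure μ]
    {P : ι → Ω → ℝ × ℝ} (hP : iIndepFun P μ) (hL4 : ∀ i, MemLp (P i) 4 μ)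
    (h₁ : ∀ i, ∫ ω, (P i ω).1 ∂μ = 0) (h₂ : ∀ i, ∫ ω, (P i ω).2 ∂μ = 0)
    (h₁₂ : ∀ i, ∫ ω, (P i ω).1 * (P i ω).2 ∂μ = 0) {K α β : ℝ}
    (hK : ∀ i, ∫ ω, (P i ω).1 ^ 2 * (P i ω).2 ^ 2 ∂μ ≤ K)
    (hα : ∀ i, ∫ ω, (P i ω).1 ^ 2 ∂μ ≤ α) (hβ : ∀ i, ∫ ω, (P i ω).2 ^ 2 ∂μ ≤ β)
    (s : Finset ι) :
    ∫ ω, (∑ i ∈ s, P i ω).1 ^ 2 * (∑ i ∈ s, P i ω).2 ^ 2 ∂μ ≤ #s * K + #s ^ 2 * (α * β) := by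
  classical
  have hL2 : ∀ i, MemLp (P i) 2 μ := fun i => (hL4 i).mono_exponent (by norm_num)
  have hmean : ∀ s : Finset ι,
      (∫ ω, (∑ i ∈ s, P i ω).1 ∂μ) = 0 ∧ ∫ ω, (∑ i ∈ s, P i ω).2 ∂μ = 0 := by
    intro s
    simp only [Prod.fst_sum, Prod.snd_sum]
    rw [integral_finsetSum _ fun i _ => ((hL4 i).fst.integrable (by norm_num)),
      integral_finsetSum _ fun i _ => ((hL4 i).snd.integrable (by norm_num))]
    exact ⟨sum_eq_zero fun i _ => h₁ i, sum_eq_zero fun i _ => h₂ i⟩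
  have hfst := (hP.comp (fun _ => Prod.fst) fun _ => measurable_fst).integral_sum_sq_le
    (fun i => (hL2 i).fst) h₁ hα
  have hsnd := (hP.comp (fun _ => Prod.snd) fun _ => measurable_snd).integral_sum_sq_le
    (fun i => (hL2 i).snd) h₂ hβ
  simp only [Function.comp_apply, ← Prod.fst_sum, ← Prod.snd_sum] at hfst hsnd
  induction s using Finset.induction_on with
  | empty => simp
  | insert a s ha ih =>
    have hind : IndepFun (P a) (fun ω => ∑ i ∈ s, P i ω) μ := by
      simpa only [Finset.sum_fn] using (hP.indepFun_finsetSum_of_notMem₀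
        (fun i => (hL4 i).aestronglyMeasurable.aemeasurable) ha).symm
    have hsum := hind.integral_add_sq_mul_add_sq (hL4 a) (memLp_finsetSum s fun i _ => hL4 i)
      (h₁ a) (h₂ a) (h₁₂ a) (hmean s).1 (hmean s).2
    simp only [sum_insert ha, Prod.fst_add, Prod.snd_add, card_insert_of_notMem ha]
    rw [hsum]
    have hα0 : 0 ≤ α := (integral_nonneg fun ω => sq_nonneg _).trans (hα a)
    have hβ0 : 0 ≤ β := (integral_nonneg fun ω => sq_nonneg _).trans (hβ a)
    have hX := mul_le_mul (hα a) (hsnd s) (integral_nonneg fun ω => sq_nonneg _) hα0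
    have hY := mul_le_mul (hβ a) (hfst s) (integral_nonneg fun ω => sq_nonneg _) hβ0
    push_cast
    linarith [hK a, mul_nonneg hα0 hβ0]

end Moments

theorem stmt_14_general {Ω : Type*} [MeasurableSpace Ω] (μ : Measure Ω) [IsProbabilityMeasure μ]
    (m : ℕ) (hm : 0 < m) (M : Fin m → Ω → ℝ → ℝ)
    (hmeas : ∀ a, Measurable (M a))
    (hindep : iIndepFun M μ)
    (hmean0 : ∀ (a : Fin m) (s t : ℝ), s ≤ t → ∫ ω, (M a ω t - M a ω s) ∂μ = 0)
    (huncorr : ∀ (a : Fin m) (s t s' t' : ℝ), s ≤ t → t ≤ s' → s' ≤ t' →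
      ∫ ω, (M a ω t - M a ω s) * (M a ω t' - M a ω s') ∂μ = 0)
    (hint : ∀ (a b : Fin m) (u x y z : ℝ),
      Integrable (fun ω => (M a ω x - M a ω u) ^ 2 * (M b ω z - M b ω y) ^ 2) μ)
    (K : ℝ)
    (h4 : ∀ (a : Fin m) (s t : ℝ), s ≤ t → ∫ ω, (M a ω t - M a ω s) ^ 4 ∂μ ≤ K)
    (F : ℝ → ℝ) (hFmono : Monotone F)
    (h2 : ∀ (a : Fin m) (s t : ℝ), s ≤ t → ∫ ω, (M a ω t - M a ω s) ^ 2 ∂μ ≤ F t - F s)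
    (S : Ω → ℝ → ℝ) (hS : ∀ ω t, S ω t = (m : ℝ) ^ (-(1/2 : ℝ)) * ∑ a, M a ω t)
    (u x y : ℝ) (hux : u < x) (hxy : x < y) :
    ∫ ω, (S ω x - S ω u) ^ 2 * (S ω y - S ω x) ^ 2 ∂μ ≤ K / m + (F y - F u) ^ 2 := by
  set P : Fin m → Ω → ℝ × ℝ := fun a ω => (M a ω x - M a ω u, M a ω y - M a ω x)
  have hincr : ∀ a s t, MemLp (fun ω => M a ω t - M a ω s) 4 μ := fun a s t =>
    memLp_four_of_integrable_pow_four (by fun_prop) (by simpa [← pow_add] using hint a a s t s t)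
  have hL4 : ∀ a, MemLp (P a) 4 μ := fun a => MemLp.of_fst_snd ⟨hincr a u x, hincr a x y⟩
  have hP : iIndepFun P μ :=
    hindep.comp (fun _ f => (f x - f u, f y - f x)) fun _ => by fun_prop
  have hK : ∀ a, ∫ ω, (P a ω).1 ^ 2 * (P a ω).2 ^ 2 ∂μ ≤ K := fun a =>
    (integral_fst_sq_mul_snd_sq_le (hL4 a)).trans (by linarith [h4 a u x hux.le, h4 a x y hxy.le])
  have hsum := hP.integral_sum_sq_mul_sq_le hL4 (fun a => hmean0 a u x hux.le)
    (fun a => hmean0 a x y hxy.le) (fun a => huncorr a u x x y hux.le le_rfl hxy.le) hK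
    (fun a => h2 a u x hux.le) (fun a => h2 a x y hxy.le) univ
  have hscale : ∀ ω, (S ω x - S ω u) ^ 2 * (S ω y - S ω x) ^ 2 =
      (m : ℝ)⁻¹ ^ 2 * ((∑ a, P a ω).1 ^ 2 * (∑ a, P a ω).2 ^ 2) := fun ω => by
    simp only [hS, Prod.fst_sum, Prod.snd_sum, P, ← mul_sub, ← sum_sub_distrib, mul_pow,
      Real.rpow_neg_half_sq (Nat.cast_nonneg m)]
    ring
  have hm0 : (m : ℝ) ≠ 0 := Nat.cast_ne_zero.2 hm.ne'
  rw [integral_congr_ae (ae_of_all _ hscale), integral_const_mul]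
  calc (m : ℝ)⁻¹ ^ 2 * ∫ ω, (∑ a, P a ω).1 ^ 2 * (∑ a, P a ω).2 ^ 2 ∂μ
      ≤ (m : ℝ)⁻¹ ^ 2 * (m * K + m ^ 2 * ((F x - F u) * (F y - F x))) := by
        gcongr
        simpa using hsum
    _ = K / m + (F x - F u) * (F y - F x) := by field_simp
    _ ≤ K / m + (F y - F u) ^ 2 := by linarith [hFmono.sub_mul_sub_le_sq hux.le hxy.le]

/-- Under the setup of the moment decomposition for `S = m^{-1/2} Σₐ Mₐ`, if fourth
moments of increments are bounded by `K` and second moments are dominated by increments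
of a nondecreasing continuous `F`, then
`E[|S(x)−S(u)|²|S(y)−S(x)|²] ≤ K/m + (F(y)−F(u))²`. -/
theorem stmt_14 {Ω : Type*} [MeasurableSpace Ω] (μ : Measure Ω) [IsProbabilityMeasure μ]
    (m : ℕ) (hm : 0 < m) (M : Fin m → Ω → ℝ → ℝ)
    (hmeas : ∀ a, Measurable (M a))
    (hindep : iIndepFun M μ)
    (hident : ∀ a b : Fin m, IdentDistrib (M a) (M b) μ μ)
    (hmean0 : ∀ (a : Fin m) (s t : ℝ), s ≤ t → ∫ ω, (M a ω t - M a ω s) ∂μ = 0)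
    (huncorr : ∀ (a : Fin m) (s t s' t' : ℝ), s ≤ t → t ≤ s' → s' ≤ t' →
      ∫ ω, (M a ω t - M a ω s) * (M a ω t' - M a ω s') ∂μ = 0)
    (hint : ∀ (a b : Fin m) (u x y z : ℝ),
      Integrable (fun ω => (M a ω x - M a ω u) ^ 2 * (M b ω z - M b ω y) ^ 2) μ)
    (K : ℝ)
    (h4 : ∀ (a : Fin m) (s t : ℝ), s ≤ t → ∫ ω, (M a ω t - M a ω s) ^ 4 ∂μ ≤ K)
    (F : ℝ → ℝ) (hFmono : Monotone F) (hFcont : Continuous F)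
    (h2 : ∀ (a : Fin m) (s t : ℝ), s ≤ t → ∫ ω, (M a ω t - M a ω s) ^ 2 ∂μ ≤ F t - F s)
    (S : Ω → ℝ → ℝ) (hS : ∀ ω t, S ω t = (m : ℝ) ^ (-(1/2 : ℝ)) * ∑ a, M a ω t)
    (u x y : ℝ) (hux : u < x) (hxy : x < y) (hu : 0 ≤ u) :
    ∫ ω, (S ω x - S ω u) ^ 2 * (S ω y - S ω x) ^ 2 ∂μ ≤ K / m + (F y - F u) ^ 2 :=
  stmt_14_general μ m hm M hmeas hindep hmean0 huncorr hint K h4 F hFmono h2 S hS u x y hux hxy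
end
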